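/- If a random variable ζ satisfies E[exp(ζ²/σ²)] ≤ e for some σ > 0, then for every γ ≥ 0, E[exp(γζ)] ≤ exp(3γ²σ²/4 + 1) (and in particular, if additionally E[ζ] = 0, one has E[exp(γζ)] ≤ exp(γ²σ²)). -/

import Mathlib

/-!
The AM-GM inequality `γζ ≤ γ²σ²/(4κ) + κζ²/σ²` bounds `E[exp(γζ)]` by `exp(γ²σ²/(4κ)) E[exp(κζ²/σ²)]`,
and Jensen's inequality for the concave map `x ↦ x ^ κ` gives `E[exp(κζ²/σ²)] ≤ e ^ κ` for `κ ≤ 1`.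
The case `κ = 1` is the first bound. For a centred `ζ`, `κ = 1/2` settles `γ²σ² ≥ 1`, while for
`γ²σ² ≤ 1` the elementary inequality `exp x ≤ x + exp (x²)` gives
`E[exp(γζ)] ≤ γ E[ζ] + E[exp(γ²σ² · ζ²/σ²)] ≤ exp(γ²σ²)`.
-/

open MeasureTheory Real

lemma Real.exp_le_add_exp_sq (x : ℝ) : exp x ≤ x + exp (x ^ 2) := by
  have h_sq := add_one_le_exp (x ^ 2)
  rcases le_or_gt x (-1) with hx | hx
  · have : exp x ≤ 1 := exp_le_one_iff.mpr (by linarith)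
    nlinarith
  rcases le_or_gt x 1 with hx' | hx'
  · have := (abs_le.mp (abs_exp_sub_one_sub_id_le (abs_le.mpr ⟨hx.le, hx'⟩))).2
    linarith
  · have := exp_le_exp.mpr (show x ≤ x ^ 2 by nlinarith)
    linarith

lemma Real.mul_le_sq_div_add_mul_sq_div {σ κ : ℝ} (hσ : σ ≠ 0) (hκ : 0 < κ) (γ x : ℝ) :
    γ * x ≤ γ ^ 2 * σ ^ 2 / (4 * κ) + κ * (x ^ 2 / σ ^ 2) := by
  have key : γ ^ 2 * σ ^ 2 / (4 * κ) + κ * (x ^ 2 / σ ^ 2) - γ * x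
      = (2 * κ * x / σ - γ * σ) ^ 2 / (4 * κ) := by
    field_simp
    ring
  have : 0 ≤ (2 * κ * x / σ - γ * σ) ^ 2 / (4 * κ) := by positivity
  linarith

section

variable {Ω : Type*} [MeasurableSpace Ω] {μ : Measure Ω}

lemma integrable_exp_mul_of_integrable_exp [IsFiniteMeasure μ] {f : Ω → ℝ}
    (hf : Integrable (fun ω => exp (f ω)) μ) {s : ℝ} (hs0 : 0 ≤ s) (hs1 : s ≤ 1) :
    Integrable (fun ω => exp (s * f ω)) μ := by
  refine (hf.add (integrable_const 1)).mono' ?_ (Filter.Eventually.of_forall fun ω => ?_)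
  · simp_rw [mul_comm s, exp_mul]
    exact (continuous_rpow_const hs0).comp_aestronglyMeasurable hf.aestronglyMeasurable
  · rw [norm_of_nonneg (exp_pos _).le, Pi.add_apply]
    rcases le_total 0 (f ω) with hfω | hfω
    · have := exp_le_exp.mpr (show s * f ω ≤ f ω by nlinarith)
      linarith [exp_pos 1]
    · have := exp_le_one_iff.mpr (show s * f ω ≤ 0 by nlinarith)
      linarith [exp_pos (f ω)]

variable [IsProbabilityMeasure μ]

lemma integral_exp_mul_le_rpow {f : Ω → ℝ} (hf : Integrable (fun ω => exp (f ω)) μ)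
    {s : ℝ} (hs0 : 0 ≤ s) (hs1 : s ≤ 1) :
    ∫ ω, exp (s * f ω) ∂μ ≤ (∫ ω, exp (f ω) ∂μ) ^ s := by
  have h_int := integrable_exp_mul_of_integrable_exp hf hs0 hs1
  simp_rw [mul_comm s, exp_mul] at h_int ⊢
  exact (concaveOn_rpow hs0 hs1).le_map_integral (continuous_rpow_const hs0).continuousOn
    isClosed_Ici (Filter.Eventually.of_forall fun ω => (exp_pos _).le) hf h_int

lemma integral_exp_mul_le_exp_of_integral_exp_le {f : Ω → ℝ}
    (hf : Integrable (fun ω => exp (f ω)) μ) (hbound : ∫ ω, exp (f ω) ∂μ ≤ exp 1)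
    {s : ℝ} (hs0 : 0 ≤ s) (hs1 : s ≤ 1) :
    ∫ ω, exp (s * f ω) ∂μ ≤ exp s :=
  calc ∫ ω, exp (s * f ω) ∂μ ≤ (∫ ω, exp (f ω) ∂μ) ^ s := integral_exp_mul_le_rpow hf hs0 hs1
    _ ≤ exp 1 ^ s := rpow_le_rpow (integral_nonneg fun _ => (exp_pos _).le) hbound hs0
    _ = exp s := exp_one_rpow s

variable {ζ : Ω → ℝ} {σ : ℝ}

lemma integral_exp_mul_le_of_integral_exp_sq_div_le (hσ : σ ≠ 0)
    (hζ : AEStronglyMeasurable ζ μ) (hint : Integrable (fun ω => exp (ζ ω ^ 2 / σ ^ 2)) μ)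
    (hbound : ∫ ω, exp (ζ ω ^ 2 / σ ^ 2) ∂μ ≤ exp 1)
    {κ : ℝ} (hκ0 : 0 < κ) (hκ1 : κ ≤ 1) (γ : ℝ) :
    Integrable (fun ω => exp (γ * ζ ω)) μ ∧
      ∫ ω, exp (γ * ζ ω) ∂μ ≤ exp (γ ^ 2 * σ ^ 2 / (4 * κ) + κ) := by
  set c := exp (γ ^ 2 * σ ^ 2 / (4 * κ))
  have h_young (ω : Ω) : exp (γ * ζ ω) ≤ c * exp (κ * (ζ ω ^ 2 / σ ^ 2)) := by
    rw [← exp_add]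
    exact exp_le_exp.mpr (mul_le_sq_div_add_mul_sq_div hσ hκ0 γ (ζ ω))
  have h_int_κ := (integrable_exp_mul_of_integrable_exp hint hκ0.le hκ1).const_mul c
  have h_int : Integrable (fun ω => exp (γ * ζ ω)) μ :=
    h_int_κ.mono' (continuous_exp.comp_aestronglyMeasurable (hζ.const_mul γ))
      (Filter.Eventually.of_forall fun ω => by
        rw [norm_of_nonneg (exp_pos _).le]
        exact h_young ω)
  refine ⟨h_int, ?_⟩
  calc ∫ ω, exp (γ * ζ ω) ∂μ ≤ ∫ ω, c * exp (κ * (ζ ω ^ 2 / σ ^ 2)) ∂μ :=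
        integral_mono h_int h_int_κ h_young
    _ = c * ∫ ω, exp (κ * (ζ ω ^ 2 / σ ^ 2)) ∂μ := integral_const_mul _ _
    _ ≤ c * exp κ := mul_le_mul_of_nonneg_left
        (integral_exp_mul_le_exp_of_integral_exp_le hint hbound hκ0.le hκ1) (exp_pos _).le
    _ = exp (γ ^ 2 * σ ^ 2 / (4 * κ) + κ) := (exp_add _ _).symm

lemma integral_exp_mul_le_of_integral_eq_zero_of_sq_mul_sq_le_one (hσ : σ ≠ 0)
    (hζint : Integrable ζ μ) (hint : Integrable (fun ω => exp (ζ ω ^ 2 / σ ^ 2)) μ)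
    (hbound : ∫ ω, exp (ζ ω ^ 2 / σ ^ 2) ∂μ ≤ exp 1) (hmean : ∫ ω, ζ ω ∂μ = 0)
    {γ : ℝ} (hγσ : γ ^ 2 * σ ^ 2 ≤ 1) :
    ∫ ω, exp (γ * ζ ω) ∂μ ≤ exp (γ ^ 2 * σ ^ 2) := by
  set t := γ ^ 2 * σ ^ 2
  have h_sq (ω : Ω) : (γ * ζ ω) ^ 2 = t * (ζ ω ^ 2 / σ ^ 2) := by
    field_simp
    ring
  have h_int_t := integrable_exp_mul_of_integrable_exp hint (by positivity) hγσ
  have h_int := (integral_exp_mul_le_of_integral_exp_sq_div_le hσ hζint.aestronglyMeasurable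
    hint hbound one_pos le_rfl γ).1
  calc ∫ ω, exp (γ * ζ ω) ∂μ ≤ ∫ ω, (γ * ζ ω + exp (t * (ζ ω ^ 2 / σ ^ 2))) ∂μ :=
        integral_mono h_int ((hζint.const_mul γ).add h_int_t) fun ω => by
          simpa only [h_sq] using exp_le_add_exp_sq (γ * ζ ω)
    _ = γ * ∫ ω, ζ ω ∂μ + ∫ ω, exp (t * (ζ ω ^ 2 / σ ^ 2)) ∂μ := by
        rw [integral_add (hζint.const_mul γ) h_int_t, integral_const_mul]
    _ ≤ exp t := by
        rw [hmean, mul_zero, zero_add]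
        exact integral_exp_mul_le_exp_of_integral_exp_le hint hbound (by positivity) hγσ

end

theorem stmt_0_general {Ω : Type*} [MeasureSpace Ω] [IsProbabilityMeasure (volume : Measure Ω)]
    (ζ : Ω → ℝ) (σ : ℝ) (hσ : 0 < σ)
    (hζint : Integrable ζ)
    (hint : Integrable (fun ω => Real.exp (ζ ω ^ 2 / σ ^ 2)))
    (hbound : ∫ ω, Real.exp (ζ ω ^ 2 / σ ^ 2) ≤ Real.exp 1) :
    ∀ γ : ℝ, 0 ≤ γ →
      (∫ ω, Real.exp (γ * ζ ω)) ≤ Real.exp (3 * γ ^ 2 * σ ^ 2 / 4 + 1) ∧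
      ((∫ ω, ζ ω) = 0 → (∫ ω, Real.exp (γ * ζ ω)) ≤ Real.exp (γ ^ 2 * σ ^ 2)) := by
  intro γ _
  have h_bound_of (κ : ℝ) (hκ0 : 0 < κ) (hκ1 : κ ≤ 1) :=
    (integral_exp_mul_le_of_integral_exp_sq_div_le hσ.ne' hζint.aestronglyMeasurable hint hbound
      hκ0 hκ1 γ).2
  have h_nonneg : 0 ≤ γ ^ 2 * σ ^ 2 := by positivity
  refine ⟨(h_bound_of 1 one_pos le_rfl).trans (exp_le_exp.mpr (by linarith)), fun hmean => ?_⟩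
  rcases le_total (γ ^ 2 * σ ^ 2) 1 with hγσ | hγσ
  · exact integral_exp_mul_le_of_integral_eq_zero_of_sq_mul_sq_le_one hσ.ne' hζint hint hbound
      hmean hγσ
  · exact (h_bound_of (1 / 2) (by norm_num) (by norm_num)).trans (exp_le_exp.mpr (by linarith))

/-- Sub-Gaussian moment bound (part (a) of the key lemma): if `E[exp(ζ²/σ²)] ≤ e`,
then for all `γ ≥ 0`, `E[exp(γζ)] ≤ exp(3γ²σ²/4 + 1)`; and if moreover `E[ζ] = 0`,
then `E[exp(γζ)] ≤ exp(γ²σ²)`. -/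
theorem stmt_0 {Ω : Type*} [MeasureSpace Ω] [IsProbabilityMeasure (volume : Measure Ω)]
    (ζ : Ω → ℝ) (σ : ℝ) (hσ : 0 < σ) (hmeas : Measurable ζ)
    (hζint : Integrable ζ)
    (hint : Integrable (fun ω => Real.exp (ζ ω ^ 2 / σ ^ 2)))
    (hbound : ∫ ω, Real.exp (ζ ω ^ 2 / σ ^ 2) ≤ Real.exp 1) :
    ∀ γ : ℝ, 0 ≤ γ →
      (∫ ω, Real.exp (γ * ζ ω)) ≤ Real.exp (3 * γ ^ 2 * σ ^ 2 / 4 + 1) ∧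
      ((∫ ω, ζ ω) = 0 → (∫ ω, Real.exp (γ * ζ ω)) ≤ Real.exp (γ ^ 2 * σ ^ 2)) :=
  stmt_0_general ζ σ hσ hζint hint hbound
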